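/- Let ε > 0 and let u be a solution of ε²u″ + f(s,u) = 0 defined on all of ℝ. If u(s*) ∉ (0,1) for some s* ∈ ℝ, then either u(s) ∉ (0,1) for all s ≤ s*, or u(s) ∉ (0,1) for all s ≥ s*. -/

import Mathlib

open MeasureTheory Filter Set

noncomputable section

/-- `u` is a solution of `ε² u'' + f(s,u) = 0` on all of `ℝ`, with `v = u'`. -/
def IsSolNagumo (f : ℝ → ℝ → ℝ) (ε : ℝ) (u v : ℝ → ℝ) : Prop :=
  (∀ x : ℝ, HasDerivAt u (v x) x) ∧
  (∀ x : ℝ, v x = v 0 + ∫ t in (0:ℝ)..x, -(1 / ε ^ 2) * f t (u t))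

/-!
Suppose `u` re-enters `(0, 1)` on both sides of `s*`, at `x₁ ≤ s* ≤ x₂`. Then `u` has an extremum
`m ∈ (x₁, x₂)` with `u m ∉ (0, 1)` and `u' m = 0`. As `a` only takes the values `a₋, a₊ ∈ [0, 1]`,
`|f t w| ≤ min(w, 1 - w)` on `[0, 1]` and `f t w = 0` elsewhere, so `|f t w| ≤ |w - u m|` for all
`t, w`. Grönwall's lemma then forces `u ≡ u m`, contradicting `u x₁ ∈ (0, 1)`.
-/

theorem Monotone.exists_mem_Ico_succ {α : Type*} [LinearOrder α] {s : ℤ → α} (hs : Monotone s)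
    {x : α} (hlo : ∃ k, s k ≤ x) (hhi : ∃ k, x < s k) : ∃ k, x ∈ Ico (s k) (s (k + 1)) := by
  have hbdd : ∃ b : ℤ, ∀ k, s k ≤ x → k ≤ b := by
    obtain ⟨b, hb⟩ := hhi
    exact ⟨b, fun k hk => hs.reflect_lt (hk.trans_lt hb) |>.le⟩
  obtain ⟨k, hk, hmax⟩ := Int.exists_greatest_of_bdd hbdd hlo
  exact ⟨k, hk, lt_of_not_ge fun h => (Int.lt_succ k).not_ge (hmax _ h)⟩

theorem natCast_mul_le_sub_of_le_sub_succ {s : ℤ → ℝ} {δ : ℝ} (hs : ∀ k, δ ≤ s (k + 1) - s k)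
    (k : ℤ) (n : ℕ) : n * δ ≤ s (k + n) - s k := by
  induction n with
  | zero => simp
  | succ n ih =>
    have := hs (k + n)
    push_cast
    rw [← add_assoc]
    linarith

theorem exists_mem_Ico_of_le_sub_succ {s : ℤ → ℝ} {δ : ℝ} (hδ : 0 < δ)
    (hs : ∀ k, δ ≤ s (k + 1) - s k) (x : ℝ) : ∃ k, x ∈ Ico (s k) (s (k + 1)) := by
  refine Monotone.exists_mem_Ico_succ
    (monotone_int_of_le_succ fun k => by linarith [hs k]) ?_ ?_
  · obtain ⟨n, hn⟩ := exists_nat_gt ((s 0 - x) / δ)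
    refine ⟨-n, ?_⟩
    have := natCast_mul_le_sub_of_le_sub_succ hs (-n) n
    rw [neg_add_cancel] at this
    linarith [(div_lt_iff₀ hδ).1 hn]
  · obtain ⟨n, hn⟩ := exists_nat_gt ((x - s 0) / δ)
    refine ⟨n, ?_⟩
    have := natCast_mul_le_sub_of_le_sub_succ hs 0 n
    rw [zero_add] at this
    linarith [(div_lt_iff₀ hδ).1 hn]

open scoped Classical in
theorem eq_ite_mem_iUnion_Ico {s : ℤ → ℝ} {δ am ap : ℝ} (hδ : 0 < δ)
    (hs : ∀ k, δ ≤ s (k + 1) - s k) {a : ℝ → ℝ}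
    (haval : ∀ k : ℤ,
      (∀ x : ℝ, s (2 * k) ≤ x → x < s (2 * k + 1) → a x = am) ∧
      (∀ x : ℝ, s (2 * k + 1) ≤ x → x < s (2 * k + 2) → a x = ap)) (x : ℝ) :
    a x = if x ∈ ⋃ k : ℤ, Ico (s (2 * k)) (s (2 * k + 1)) then am else ap := by
  split_ifs with hx
  · obtain ⟨k, hk⟩ := mem_iUnion.1 hx
    exact (haval k).1 x hk.1 hk.2
  · obtain ⟨k, hk⟩ := exists_mem_Ico_of_le_sub_succ hδ hs x
    obtain ⟨j, rfl | rfl⟩ := k.even_or_odd'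
    · exact absurd (mem_iUnion.2 ⟨j, hk⟩) hx
    · exact (haval j).2 x hk.1 (by simpa [add_assoc] using hk.2)

theorem abs_ite_cubic_le_abs_sub {α c : ℝ} (hα : α ∈ Icc 0 1) (hc : c ∉ Ioo 0 1) (u : ℝ) :
    |if 0 ≤ u ∧ u ≤ 1 then u * (1 - u) * (u - α) else 0| ≤ |u - c| := by
  split_ifs with hu
  · obtain ⟨hu0, hu1⟩ := hu
    have hprod : 0 ≤ u * (1 - u) := mul_nonneg hu0 (sub_nonneg.2 hu1)
    have hcubic : |u * (1 - u) * (u - α)| ≤ u * (1 - u) := by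
      rw [abs_mul, abs_of_nonneg hprod]
      exact mul_le_of_le_one_right hprod (abs_le.2 ⟨by linarith [hα.2], by linarith [hα.1]⟩)
    refine hcubic.trans ?_
    rcases not_and_or.1 (mt mem_Ioo.2 hc) with hc | hc
    · rw [abs_of_nonneg (by linarith)]; nlinarith
    · rw [abs_of_nonpos (by linarith)]; nlinarith
  · simp

theorem Measurable.ite_cubic {u a : ℝ → ℝ} (hu : Measurable u) (ha : Measurable a) :
    Measurable fun t => if 0 ≤ u t ∧ u t ≤ 1 then u t * (1 - u t) * (u t - a t) else 0 :=
  .ite ((measurableSet_le measurable_const hu).inter (measurableSet_le hu measurable_const))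
    (by fun_prop) measurable_const

theorem exists_isLocalExtr_notMem_Ioo {u : ℝ → ℝ} {x₁ x₂ y p q : ℝ}
    (hu : ContinuousOn u (Icc x₁ x₂)) (hy : y ∈ Icc x₁ x₂) (h₁ : u x₁ ∈ Ioo p q)
    (h₂ : u x₂ ∈ Ioo p q) (hy' : u y ∉ Ioo p q) : ∃ m, IsLocalExtr u m ∧ u m ∉ Ioo p q := by
  have hends : ∀ z ∈ Icc x₁ x₂ \ Ioo x₁ x₂, u z ∈ Ioo p q := by
    rw [Icc_sdiff_Ioo_same (hy.1.trans hy.2)]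
    rintro z (rfl | rfl) <;> assumption
  rcases not_and_or.1 (mt mem_Ioo.2 hy') with hy' | hy' <;> push Not at hy'
  · obtain ⟨m, hm, hmin⟩ := isCompact_Icc.exists_isMinOn_mem_subset hu hy
      fun z hz => hy'.trans_lt (hends z hz).1
    exact ⟨m, hmin.isExtr.isLocalExtr (Icc_mem_nhds hm.1 hm.2),
      fun h => (hmin hy).not_gt (hy'.trans_lt h.1)⟩
  · obtain ⟨m, hm, hmax⟩ := isCompact_Icc.exists_isMaxOn_mem_subset hu hy
      fun z hz => (hends z hz).2.trans_le hy'
    exact ⟨m, hmax.isExtr.isLocalExtr (Icc_mem_nhds hm.1 hm.2),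
      fun h => (hmax hy).not_gt (h.2.trans_le hy')⟩

section Uniqueness

variable {u v g : ℝ → ℝ} {C c m : ℝ}

/- Grönwall's lemma applies to `φ x = ∫ t in m..x, (|u t - c| + |v t|)`, since `φ m = 0` and
`φ' ≤ (|C| + 1) φ` on `[m, ∞)`. -/
theorem eq_of_le_of_abs_le_mul_abs_sub (hu : ∀ x, HasDerivAt u (v x) x)
    (hg : ∀ p q, IntervalIntegrable g volume p q) (hv : ∀ x, v x = ∫ t in m..x, g t)
    (hgb : ∀ t, |g t| ≤ C * |u t - c|) (hum : u m = c) {x : ℝ} (hx : m ≤ x) : u x = c := by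
  have hvc : Continuous v := (funext hv).symm ▸ intervalIntegral.continuous_primitive hg m
  have huc : Continuous u := continuous_iff_continuousAt.2 fun x => (hu x).continuousAt
  set w : ℝ → ℝ := fun t => |u t - c| + |v t|
  have hwc : Continuous w := by fun_prop
  have hgw : ∀ t, ‖g t‖ ≤ |C| * w t := fun t =>
    (hgb t).trans (mul_le_mul (le_abs_self C) (le_add_of_nonneg_right (abs_nonneg _))
      (abs_nonneg _) (abs_nonneg C))
  have hu_le : ∀ y, m ≤ y → |u y - c| ≤ ∫ t in m..y, w t := fun y hy => by
    rw [← hum, ← intervalIntegral.integral_eq_sub_of_hasDerivAt (fun t _ => hu t)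
      (hvc.intervalIntegrable m y)]
    exact intervalIntegral.norm_integral_le_of_norm_le (f := v) (g := w) hy
      (ae_of_all _ fun t _ => le_add_of_nonneg_left (abs_nonneg (u t - c)))
      (hwc.intervalIntegrable m y)
  have hv_le : ∀ y, m ≤ y → |v y| ≤ |C| * ∫ t in m..y, w t := fun y hy => by
    rw [hv y, ← intervalIntegral.integral_const_mul]
    exact intervalIntegral.norm_integral_le_of_norm_le hy (ae_of_all _ fun t _ => hgw t)
      ((hwc.intervalIntegrable m y).const_mul _)
  have hφ : ∫ t in m..x, w t = 0 := by
    refine eq_zero_of_abs_deriv_le_mul_abs_self_of_eq_zero_right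
      (f := fun y => ∫ t in m..y, w t) (f' := w) (K := |C| + 1) (b := x)
      (fun y _ => ?_) (fun y _ => ?_) intervalIntegral.integral_same (fun y hy => ?_) x ⟨hx, le_rfl⟩
    · exact (hwc.integral_hasStrictDerivAt m y).hasDerivAt.continuousAt.continuousWithinAt
    · exact (hwc.integral_hasStrictDerivAt m y).hasDerivAt.hasDerivWithinAt
    · have hφ_nonneg : 0 ≤ ∫ t in m..y, w t :=
        intervalIntegral.integral_nonneg hy.1 fun t _ => by positivity
      rw [Real.norm_of_nonneg (by positivity), Real.norm_of_nonneg hφ_nonneg]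
      linarith [hu_le y hy.1, hv_le y hy.1]
  simpa [hφ, sub_eq_zero] using hu_le x hx

theorem eq_of_abs_le_mul_abs_sub (hu : ∀ x, HasDerivAt u (v x) x)
    (hg : ∀ p q, IntervalIntegrable g volume p q) (hv : ∀ x, v x = ∫ t in m..x, g t)
    (hgb : ∀ t, |g t| ≤ C * |u t - c|) (hum : u m = c) (x : ℝ) : u x = c := by
  rcases le_total m x with hx | hx
  · exact eq_of_le_of_abs_le_mul_abs_sub hu hg hv hgb hum hx
  · have hu' : ∀ y, HasDerivAt (fun y => u (-y)) (-v (-y)) y := fun y => by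
      simpa [Function.comp_def] using (hu (-y)).comp y (hasDerivAt_neg y)
    have hv' : ∀ y, -v (-y) = ∫ t in -m..y, g (-t) := fun y => by
      rw [intervalIntegral.integral_comp_neg, neg_neg, intervalIntegral.integral_symm, hv]
    simpa using eq_of_le_of_abs_le_mul_abs_sub hu'
      (fun p q => by simpa using (IntervalIntegrable.iff_comp_neg (by simp)).1 (hg (-p) (-q))) hv'
      (fun t => hgb (-t)) (by simpa using hum) (neg_le_neg hx)

end Uniqueness

theorem stmt_12_general
    (am ap δ : ℝ) (ham : 0 < am) (ham' : am < 1 / 2) (hap : 1 / 2 < ap) (hap' : ap < 1)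
    (s : ℤ → ℝ) (hδ : 0 < δ) (hs : ∀ k : ℤ, δ ≤ s (k + 1) - s k)
    (a : ℝ → ℝ)
    (haval : ∀ k : ℤ,
      (∀ x : ℝ, s (2 * k) ≤ x → x < s (2 * k + 1) → a x = am) ∧
      (∀ x : ℝ, s (2 * k + 1) ≤ x → x < s (2 * k + 2) → a x = ap))
    (f : ℝ → ℝ → ℝ)
    (hf : ∀ t u : ℝ, f t u = if 0 ≤ u ∧ u ≤ 1 then u * (1 - u) * (u - a t) else 0)
    (ε : ℝ)
    (u v : ℝ → ℝ) (hsol : IsSolNagumo f ε u v)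
    (sstar : ℝ) (hustar : u sstar ∉ Set.Ioo (0:ℝ) 1) :
    (∀ x : ℝ, x ≤ sstar → u x ∉ Set.Ioo (0:ℝ) 1) ∨
    (∀ x : ℝ, sstar ≤ x → u x ∉ Set.Ioo (0:ℝ) 1) := by
  obtain ⟨hu, hv⟩ := hsol
  have huc : Continuous u := continuous_iff_continuousAt.2 fun x => (hu x).continuousAt
  by_contra! h
  obtain ⟨⟨x₁, hx₁, hu₁⟩, x₂, hx₂, hu₂⟩ := h
  obtain ⟨m, hextr, hum⟩ :=
    exists_isLocalExtr_notMem_Ioo huc.continuousOn ⟨hx₁, hx₂⟩ hu₁ hu₂ hustar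
  set g : ℝ → ℝ := fun t => -(1 / ε ^ 2) * f t (u t)
  have ha : ∀ t, a t ∈ Icc 0 1 := fun t => by
    rw [eq_ite_mem_iUnion_Ico hδ hs haval t]
    split_ifs <;> constructor <;> linarith
  have hgb : ∀ t, |g t| ≤ 1 / ε ^ 2 * |u t - u m| := fun t => by
    rw [abs_mul, abs_neg, abs_of_nonneg (by positivity), hf]
    exact mul_le_mul_of_nonneg_left (abs_ite_cubic_le_abs_sub (ha t) hum (u t)) (by positivity)
  have ha_meas : Measurable a := by
    rw [funext (eq_ite_mem_iUnion_Ico hδ hs haval)]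
    exact Measurable.ite (.iUnion fun k => measurableSet_Ico) measurable_const measurable_const
  have hg : ∀ p q, IntervalIntegrable g volume p q := fun p q => by
    refine ((continuous_const.mul (huc.sub continuous_const).abs).intervalIntegrable p q).mono_fun'
      ?_ (ae_of_all _ hgb)
    simp only [g, hf]
    exact (measurable_const.mul (huc.measurable.ite_cubic ha_meas)).aestronglyMeasurable
  have hv' : ∀ x, v x = ∫ t in m..x, g t := fun x => by
    rw [← intervalIntegral.integral_interval_sub_left (hg 0 x) (hg 0 m)]
    linarith [hv x, hv m, hextr.hasDerivAt_eq_zero (hu m)]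
  exact hum (eq_of_abs_le_mul_abs_sub hu hg hv' hgb rfl x₁ ▸ hu₁)

theorem stmt_12
    (am ap δ : ℝ) (ham : 0 < am) (ham' : am < 1 / 2) (hap : 1 / 2 < ap) (hap' : ap < 1)
    (s : ℤ → ℝ) (hδ : 0 < δ) (hs : ∀ k : ℤ, δ ≤ s (k + 1) - s k)
    (a : ℝ → ℝ)
    (haval : ∀ k : ℤ,
      (∀ x : ℝ, s (2 * k) ≤ x → x < s (2 * k + 1) → a x = am) ∧
      (∀ x : ℝ, s (2 * k + 1) ≤ x → x < s (2 * k + 2) → a x = ap))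
    (f : ℝ → ℝ → ℝ)
    (hf : ∀ t u : ℝ, f t u = if 0 ≤ u ∧ u ≤ 1 then u * (1 - u) * (u - a t) else 0)
    (ε : ℝ) (hε : 0 < ε)
    (u v : ℝ → ℝ) (hsol : IsSolNagumo f ε u v)
    (sstar : ℝ) (hustar : u sstar ∉ Set.Ioo (0:ℝ) 1) :
    (∀ x : ℝ, x ≤ sstar → u x ∉ Set.Ioo (0:ℝ) 1) ∨
    (∀ x : ℝ, sstar ≤ x → u x ∉ Set.Ioo (0:ℝ) 1) :=
  stmt_12_general am ap δ ham ham' hap hap' s hδ hs a haval f hf ε u v hsol sstar hustar
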